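/- arXiv:1510.00908 — 3 statements merged into one kernel-verified Lean document; each statement's English description precedes it below -/
import Mathlib

section
/- Under the stated assumptions, for any parameter ζ with R − ζ·1 invertible, the shifted tau-function satisfies τ[ζ]/τ = 1 + ⟨a[ζ]| F B |α⟩ and also τ[ζ]/τ = 1 − ⟨b| G A[ζ] |β⟩; explicitly, det(1 + A(R−ζ)⁻¹ B(L−ζ)) = det(1 + A B)·(1 + ⟨a|(R−ζ)⁻¹ (1+BA)⁻¹ B |α⟩) = det(1 + A B)·(1 − ⟨b| (1+AB)⁻¹ A(R−ζ)⁻¹ |β⟩). -/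
/-!
Both identities come from the Sylvester equations and two determinant identities: the
Weinstein–Aronszajn identity `det (1 + X Y) = det (1 + Y X)` and the matrix determinant lemma
for a rank-one perturbation. Shifting `L` and `R` by the same scalar does not change the
Sylvester equations, and with `Rζ = R - ζ`, `Lζ = L - ζ` they give
`Lζ A = A Rζ + |α⟩⟨a|` and `B Lζ = Rζ B - |β⟩⟨b|`. Hence `B Lζ A Rζ⁻¹ = B A + B|α⟩⟨a|Rζ⁻¹`
and `A Rζ⁻¹ B Lζ = A B - A Rζ⁻¹|β⟩⟨b|` are rank-one perturbations of `B A` and `A B`.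
-/

open Matrix

namespace Matrix

variable {ι K : Type*} [Fintype ι] [DecidableEq ι] [CommRing K]

theorem det_add_vecMulVec {M : Matrix ι ι K} (hM : IsUnit M.det) (u v : ι → K) :
    (M + vecMulVec u v).det = M.det * (1 + v ᵥ* M⁻¹ ⬝ᵥ u) := by
  rw [vecMulVec_eq (ι := Unit), det_add_replicateCol_mul_replicateRow hM, det_unique (n := Unit)]
  simp [mul_apply, vecMul, dotProduct, Finset.sum_mul]

theorem det_sub_vecMulVec {M : Matrix ι ι K} (hM : IsUnit M.det) (u v : ι → K) :
    (M - vecMulVec u v).det = M.det * (1 - v ᵥ* M⁻¹ ⬝ᵥ u) := by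
  rw [sub_eq_add_neg, ← neg_vecMulVec, det_add_vecMulVec hM, dotProduct_neg, ← sub_eq_add_neg]

theorem sub_smul_one_mul_sub_mul_sub_smul_one (L A R : Matrix ι ι K) (ζ : K) :
    (L - ζ • 1) * A - A * (R - ζ • 1) = L * A - A * R := by
  simp only [Matrix.sub_mul, Matrix.mul_sub, Matrix.smul_mul, Matrix.mul_smul, Matrix.one_mul,
    Matrix.mul_one]
  abel

variable {L R A B : Matrix ι ι K}

theorem det_one_add_mul_inv_mul_eq_of_sylvester_left {α a : ι → K}
    (hA : L * A - A * R = vecMulVec α a) (hR : IsUnit R.det) (hAB : IsUnit (1 + A * B).det) :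
    (1 + A * R⁻¹ * (B * L)).det =
      (1 + A * B).det * (1 + a ᵥ* (R⁻¹ * (1 + B * A)⁻¹ * B) ⬝ᵥ α) := by
  have hBA : IsUnit (1 + B * A).det := det_one_add_mul_comm A B ▸ hAB
  have hLA : L * A = A * R + vecMulVec α a := by rw [← hA, add_sub_cancel]
  have hrank_one : B * L * (A * R⁻¹) = B * A + vecMulVec (B *ᵥ α) (a ᵥ* R⁻¹) := by
    rw [Matrix.mul_assoc B, ← Matrix.mul_assoc L, hLA, Matrix.add_mul, Matrix.mul_assoc A,
      mul_nonsing_inv R hR, Matrix.mul_one, Matrix.mul_add, vecMulVec_mul, mul_vecMulVec]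
  rw [det_one_add_mul_comm (A * R⁻¹), hrank_one, ← add_assoc, det_add_vecMulVec hBA,
    det_one_add_mul_comm B A, vecMul_vecMul, dotProduct_mulVec, vecMul_vecMul, Matrix.mul_assoc]

theorem det_one_add_mul_inv_mul_eq_of_sylvester_right {β b : ι → K}
    (hB : R * B - B * L = vecMulVec β b) (hR : IsUnit R.det) (hAB : IsUnit (1 + A * B).det) :
    (1 + A * R⁻¹ * (B * L)).det =
      (1 + A * B).det * (1 - b ᵥ* ((1 + A * B)⁻¹ * (A * R⁻¹)) ⬝ᵥ β) := by
  have hBL : B * L = R * B - vecMulVec β b := by rw [← hB, sub_sub_cancel]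
  have hrank_one : A * R⁻¹ * (B * L) = A * B - vecMulVec ((A * R⁻¹) *ᵥ β) b := by
    rw [hBL, Matrix.mul_sub, Matrix.mul_assoc A, ← Matrix.mul_assoc R⁻¹, nonsing_inv_mul R hR,
      Matrix.one_mul, mul_vecMulVec]
  rw [hrank_one, ← add_sub_assoc, det_sub_vecMulVec hAB, dotProduct_mulVec, vecMul_vecMul]

end Matrix

theorem statement0_general {n : ℕ} (l r : Fin n → ℂ)
    (α β a b : Fin n → ℂ)
    (A B : Matrix (Fin n) (Fin n) ℂ)
    (hA : Matrix.diagonal l * A - A * Matrix.diagonal r = Matrix.vecMulVec α a)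
    (hB : Matrix.diagonal r * B - B * Matrix.diagonal l = Matrix.vecMulVec β b)
    (ζ : ℂ)
    (hζ : IsUnit (Matrix.diagonal r - ζ • (1 : Matrix (Fin n) (Fin n) ℂ)))
    (hinv : IsUnit (1 + A * B)) :
    (1 + A * (Matrix.diagonal r - ζ • 1)⁻¹ * (B * (Matrix.diagonal l - ζ • 1))).det
        = (1 + A * B).det *
          (1 + Matrix.vecMul a
            ((Matrix.diagonal r - ζ • 1)⁻¹ * (1 + B * A)⁻¹ * B) ⬝ᵥ α) ∧
    (1 + A * (Matrix.diagonal r - ζ • 1)⁻¹ * (B * (Matrix.diagonal l - ζ • 1))).det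
        = (1 + A * B).det *
          (1 - Matrix.vecMul b
            ((1 + A * B)⁻¹ * (A * (Matrix.diagonal r - ζ • 1)⁻¹)) ⬝ᵥ β) := by
  have hR := (isUnit_iff_isUnit_det _).mp hζ
  have hAB := (isUnit_iff_isUnit_det _).mp hinv
  constructor
  · refine det_one_add_mul_inv_mul_eq_of_sylvester_left ?_ hR hAB
    rw [sub_smul_one_mul_sub_mul_sub_smul_one, hA]
  · refine det_one_add_mul_inv_mul_eq_of_sylvester_right ?_ hR hAB
    rw [sub_smul_one_mul_sub_mul_sub_smul_one, hB]

/-- for a shift parameter `ζ` with `R − ζ·1` invertible, the shifted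
tau-function `τ[ζ] = det(1 + A(R−ζ)⁻¹ B(L−ζ))` satisfies
`τ[ζ] = τ·(1 + ⟨a|(R−ζ)⁻¹(1+BA)⁻¹B|α⟩)` and `τ[ζ] = τ·(1 − ⟨b|(1+AB)⁻¹A(R−ζ)⁻¹|β⟩)`. -/
theorem statement0 {n : ℕ} (hn : 1 ≤ n) (l r : Fin n → ℂ)
    (hlr : ∀ j k, l j ≠ r k) (α β a b : Fin n → ℂ)
    (A B : Matrix (Fin n) (Fin n) ℂ)
    (hA : Matrix.diagonal l * A - A * Matrix.diagonal r = Matrix.vecMulVec α a)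
    (hB : Matrix.diagonal r * B - B * Matrix.diagonal l = Matrix.vecMulVec β b)
    (ζ : ℂ)
    (hζ : IsUnit (Matrix.diagonal r - ζ • (1 : Matrix (Fin n) (Fin n) ℂ)))
    (hinv : IsUnit (1 + A * B))
    (hinv' : IsUnit (1 + A * (Matrix.diagonal r - ζ • 1)⁻¹ *
        (B * (Matrix.diagonal l - ζ • 1)))) :
    (1 + A * (Matrix.diagonal r - ζ • 1)⁻¹ * (B * (Matrix.diagonal l - ζ • 1))).det
        = (1 + A * B).det *
          (1 + Matrix.vecMul a
            ((Matrix.diagonal r - ζ • 1)⁻¹ * (1 + B * A)⁻¹ * B) ⬝ᵥ α) ∧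
    (1 + A * (Matrix.diagonal r - ζ • 1)⁻¹ * (B * (Matrix.diagonal l - ζ • 1))).det
        = (1 + A * B).det *
          (1 - Matrix.vecMul b
            ((1 + A * B)⁻¹ * (A * (Matrix.diagonal r - ζ • 1)⁻¹)) ⬝ᵥ β) :=
  statement0_general l r α β a b A B hA hB ζ hζ hinv
end

section
/- Under the stated assumptions, for any parameter ζ with R − ζ·1 and L − ζ·1 invertible, the inverse-shifted tau-function ρ satisfies ρ[ζ̄]/τ = ⟨b[ζ̄]| G |α⟩ = ⟨b| G (L−ζ)⁻¹ |α⟩, where ω[ζ̄] = T_ζ⁻¹ω; that is, τ[ζ̄]·⟨b|(L−ζ)⁻¹ G[ζ̄] |α⟩ = τ·⟨b|(L−ζ)⁻¹ G |α⟩ = τ·⟨b| G (L−ζ)⁻¹ |α⟩, where G[ζ̄] = (1 + A(R−ζ) B(L−ζ)⁻¹)⁻¹ and τ[ζ̄] = det(1 + A(R−ζ) B(L−ζ)⁻¹). -/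
open Matrix Finset

noncomputable section

private lemma mul_vecMulVec {n : ℕ} (P : Matrix (Fin n) (Fin n) ℂ) (u v : Fin n → ℂ) :
    P * Matrix.vecMulVec u v = Matrix.vecMulVec (P *ᵥ u) v := by
  ext i j
  simp only [Matrix.mul_apply, Matrix.vecMulVec_apply, Matrix.mulVec, dotProduct,
    Finset.sum_mul]
  exact Finset.sum_congr rfl fun m _ => by ring

private lemma vecMulVec_mul {n : ℕ} (Q : Matrix (Fin n) (Fin n) ℂ) (u v : Fin n → ℂ) :
    Matrix.vecMulVec u v * Q = Matrix.vecMulVec u (v ᵥ* Q) := by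
  ext i j
  simp only [Matrix.mul_apply, Matrix.vecMulVec_apply, Matrix.vecMul, dotProduct,
    Finset.mul_sum]
  exact Finset.sum_congr rfl fun m _ => by ring

private lemma mul_vecMulVec_mul {n : ℕ} (P Q : Matrix (Fin n) (Fin n) ℂ)
    (u v : Fin n → ℂ) :
    P * Matrix.vecMulVec u v * Q = Matrix.vecMulVec (P *ᵥ u) (v ᵥ* Q) := by
  rw [mul_vecMulVec, vecMulVec_mul]

private lemma vecMul_vecMulVec {n : ℕ} (y u c : Fin n → ℂ) :
    y ᵥ* Matrix.vecMulVec u c = (y ⬝ᵥ u) • c := by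
  funext j
  simp only [Matrix.vecMul, Matrix.vecMulVec_apply, dotProduct, Pi.smul_apply,
    smul_eq_mul, Finset.sum_mul]
  exact Finset.sum_congr rfl fun i _ => by ring

/-- The key pointwise identity: `b_j (Gα)_j = α_j (bᵀG)_j` for `G = (1+AB)⁻¹`. -/
private lemma key {n : ℕ} (l r : Fin n → ℂ)
    (hlr : ∀ j k, l j ≠ r k) (α β a b : Fin n → ℂ)
    (A B : Matrix (Fin n) (Fin n) ℂ)
    (hA : Matrix.diagonal l * A - A * Matrix.diagonal r = Matrix.vecMulVec α a)
    (hB : Matrix.diagonal r * B - B * Matrix.diagonal l = Matrix.vecMulVec β b)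
    (hinv : IsUnit (1 + A * B)) :
    ∀ j, b j * ((1 + A * B)⁻¹ *ᵥ α) j = α j * (Matrix.vecMul b (1 + A * B)⁻¹) j := by
  have hsub : ∀ j k, l j - r k ≠ 0 := fun j k => sub_ne_zero.mpr (hlr j k)
  have hsub' : ∀ j k, r k - l j ≠ 0 := fun j k => sub_ne_zero.mpr (hlr j k).symm
  have hA' : ∀ j k, A j k = α j * a k / (l j - r k) := by
    intro j k
    have h := congrFun (congrFun hA j) k
    simp only [Matrix.sub_apply, Matrix.diagonal_mul, Matrix.mul_diagonal,
      Matrix.vecMulVec_apply] at h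
    rw [eq_div_iff (hsub j k)]
    linear_combination h
  have hB' : ∀ k j, B k j = β k * b j / (r k - l j) := by
    intro k j
    have h := congrFun (congrFun hB k) j
    simp only [Matrix.sub_apply, Matrix.diagonal_mul, Matrix.mul_diagonal,
      Matrix.vecMulVec_apply] at h
    rw [eq_div_iff (hsub' j k)]
    linear_combination h
  have hXdet : IsUnit (1 + A * B).det := (Matrix.isUnit_iff_isUnit_det _).mp hinv
  set u : Fin n → ℂ := (1 + A * B)⁻¹ *ᵥ α with hu_def
  set v : Fin n → ℂ := b ᵥ* (1 + A * B)⁻¹ with hv_def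
  have hu : u + A *ᵥ (B *ᵥ u) = α := by
    have h1 : (1 + A * B) *ᵥ u = α := by
      rw [hu_def, Matrix.mulVec_mulVec, Matrix.mul_nonsing_inv _ hXdet, Matrix.one_mulVec]
    rw [Matrix.add_mulVec, Matrix.one_mulVec] at h1
    rw [Matrix.mulVec_mulVec]
    exact h1
  have hv : v + (v ᵥ* A) ᵥ* B = b := by
    have h1 : v ᵥ* (1 + A * B) = b := by
      rw [hv_def, Matrix.vecMul_vecMul, Matrix.nonsing_inv_mul _ hXdet, Matrix.vecMul_one]
    rw [Matrix.vecMul_add, Matrix.vecMul_one] at h1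
    rw [Matrix.vecMul_vecMul]
    exact h1
  set Bu : Fin n → ℂ := B *ᵥ u with hBu_def
  set vA : Fin n → ℂ := v ᵥ* A with hvA_def
  set s : Fin n → ℂ := fun j => b j * u j - α j * v j with hs_def
  set z : Fin n → ℂ := fun k => β k * ∑ j, s j / (r k - l j) with hz_def
  have h_u_j : ∀ j, u j = α j - ∑ k, A j k * Bu k := by
    intro j
    have := congrFun hu j
    simp only [Pi.add_apply, Matrix.mulVec, dotProduct] at this
    linear_combination this
  have h_v_j : ∀ j, v j = b j - ∑ k, vA k * B k j := by
    intro j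
    have := congrFun hv j
    simp only [Pi.add_apply, Matrix.vecMul, dotProduct] at this
    linear_combination this
  have hsA : ∀ j, s j = ∑ k, b j * α j * ((a k * Bu k + β k * vA k) / (r k - l j)) := by
    intro j
    have e1 : s j = (∑ k, α j * (vA k * B k j)) - ∑ k, b j * (A j k * Bu k) := by
      simp only [hs_def, h_u_j j, h_v_j j, mul_sub, Finset.mul_sum, mul_assoc]
      ring
    rw [e1, ← Finset.sum_sub_distrib]
    refine Finset.sum_congr rfl fun k _ => ?_
    rw [hA' j k, hB' k j]
    have h1 := hsub j k
    have h2 := hsub' j k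
    field_simp <;> ring
  have hz3 : ∀ k, a k * z k = a k * Bu k + β k * vA k := by
    intro k
    have e1 : a k * z k = ∑ j, a k * (β k * (s j / (r k - l j))) := by
      simp only [hz_def, Finset.mul_sum]
    rw [e1]
    have e2 : a k * Bu k + β k * vA k
        = ∑ j, (a k * (B k j * u j) + β k * (v j * A j k)) := by
      simp only [hBu_def, hvA_def, Matrix.mulVec, Matrix.vecMul, dotProduct,
        Finset.mul_sum, ← Finset.sum_add_distrib]
    rw [e2]
    refine Finset.sum_congr rfl fun j _ => ?_
    rw [hA' j k, hB' k j, hs_def]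
    have h1 := hsub j k
    have h2 := hsub' j k
    field_simp <;> ring
  have hsz : ∀ j, s j = -(b j * (A *ᵥ z) j) := by
    intro j
    have e1 : (A *ᵥ z) j = ∑ k, A j k * z k := by
      simp only [Matrix.mulVec, dotProduct]
    rw [e1, Finset.mul_sum, ← Finset.sum_neg_distrib, hsA j]
    refine Finset.sum_congr rfl fun k _ => ?_
    rw [hA' j k, ← hz3 k]
    have h1 := hsub j k
    have h2 := hsub' j k
    field_simp <;> ring
  have hBA : IsUnit (1 + B * A).det := by
    have h : (1 + A * B).det = (1 + B * A).det := Matrix.det_one_add_mul_comm A B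
    rwa [h] at hXdet
  have hz0 : (1 + B * A) *ᵥ z = 0 := by
    funext k
    have e1 : ((1 + B * A) *ᵥ z) k = z k + ∑ j, B k j * (A *ᵥ z) j := by
      rw [Matrix.add_mulVec, Matrix.one_mulVec, ← Matrix.mulVec_mulVec]
      simp only [Pi.add_apply]
      congr 1
    rw [e1]
    have e2 : ∑ j, B k j * (A *ᵥ z) j = ∑ j, -(β k * (s j / (r k - l j))) := by
      refine Finset.sum_congr rfl fun j _ => ?_
      rw [hB' k j, hsz j]
      have h1 := hsub j k
      have h2 := hsub' j k
      field_simp <;> ring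
    rw [e2, Finset.sum_neg_distrib, ← Finset.mul_sum, hz_def]
    try simp
  have hzz : z = 0 := by
    have h2 := congrArg (fun w => (1 + B * A)⁻¹ *ᵥ w) hz0
    simpa [Matrix.mulVec_mulVec, Matrix.nonsing_inv_mul _ hBA, Matrix.one_mulVec] using h2
  intro j
  have h4 := hsz j
  rw [hzz, Matrix.mulVec_zero] at h4
  simp only [Pi.zero_apply, mul_zero, neg_zero, hs_def] at h4
  linear_combination h4

/-- `ρ[ζ̄]/τ = ⟨b[ζ̄]|G|α⟩ = ⟨b|G(L−ζ)⁻¹|α⟩`, i.e.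
`τ[ζ̄]·⟨b|(L−ζ)⁻¹G[ζ̄]|α⟩ = τ·⟨b|(L−ζ)⁻¹G|α⟩ = τ·⟨b|G(L−ζ)⁻¹|α⟩`, where
`G[ζ̄] = (1 + A(R−ζ)B(L−ζ)⁻¹)⁻¹` and `τ[ζ̄] = det(1 + A(R−ζ)B(L−ζ)⁻¹)`. -/
theorem statement3 {n : ℕ} (hn : 1 ≤ n) (l r : Fin n → ℂ)
    (hlr : ∀ j k, l j ≠ r k) (α β a b : Fin n → ℂ)
    (A B : Matrix (Fin n) (Fin n) ℂ)
    (hA : Matrix.diagonal l * A - A * Matrix.diagonal r = Matrix.vecMulVec α a)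
    (hB : Matrix.diagonal r * B - B * Matrix.diagonal l = Matrix.vecMulVec β b)
    (ζ : ℂ)
    (hζR : IsUnit (Matrix.diagonal r - ζ • (1 : Matrix (Fin n) (Fin n) ℂ)))
    (hζL : IsUnit (Matrix.diagonal l - ζ • (1 : Matrix (Fin n) (Fin n) ℂ)))
    (hinv : IsUnit (1 + A * B))
    (hinv' : IsUnit (1 + A * (Matrix.diagonal r - ζ • 1) *
        (B * (Matrix.diagonal l - ζ • 1)⁻¹))) :
    (1 + A * (Matrix.diagonal r - ζ • 1) * (B * (Matrix.diagonal l - ζ • 1)⁻¹)).det *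
        (Matrix.vecMul b ((Matrix.diagonal l - ζ • 1)⁻¹ *
          (1 + A * (Matrix.diagonal r - ζ • 1) * (B * (Matrix.diagonal l - ζ • 1)⁻¹))⁻¹) ⬝ᵥ α)
      = (1 + A * B).det *
        (Matrix.vecMul b ((Matrix.diagonal l - ζ • 1)⁻¹ * (1 + A * B)⁻¹) ⬝ᵥ α) ∧
    (1 + A * B).det *
        (Matrix.vecMul b ((Matrix.diagonal l - ζ • 1)⁻¹ * (1 + A * B)⁻¹) ⬝ᵥ α)
      = (1 + A * B).det *
        (Matrix.vecMul b ((1 + A * B)⁻¹ * (Matrix.diagonal l - ζ • 1)⁻¹) ⬝ᵥ α) := by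
  set M : Matrix (Fin n) (Fin n) ℂ := Matrix.diagonal l - ζ • 1 with hM_def
  set N : Matrix (Fin n) (Fin n) ℂ := Matrix.diagonal r - ζ • 1 with hN_def
  set X : Matrix (Fin n) (Fin n) ℂ := 1 + A * B with hX_def
  set Y : Matrix (Fin n) (Fin n) ℂ := 1 + A * N * (B * M⁻¹) with hY_def
  have hMdet : IsUnit M.det := (Matrix.isUnit_iff_isUnit_det _).mp hζL
  have hXdet : IsUnit X.det := (Matrix.isUnit_iff_isUnit_det _).mp hinv
  have hYdet : IsUnit Y.det := (Matrix.isUnit_iff_isUnit_det _).mp hinv'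
  have hMM : M * M⁻¹ = 1 := Matrix.mul_nonsing_inv _ hMdet
  -- rank-one update relation
  have hNB : N * B = B * M + Matrix.vecMulVec β b := by
    have e : N * B - B * M = Matrix.vecMulVec β b := by
      rw [hN_def, hM_def, Matrix.sub_mul, Matrix.mul_sub, Matrix.smul_mul, Matrix.mul_smul,
        Matrix.one_mul, Matrix.mul_one, sub_sub_sub_cancel_right, hB]
    have := sub_eq_iff_eq_add.mp e
    rw [this, add_comm]
  set u0 : Fin n → ℂ := A *ᵥ β with hu0_def
  set c : Fin n → ℂ := b ᵥ* M⁻¹ with hc_def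
  have hY : Y = X + Matrix.vecMulVec u0 c := by
    have e0 : A * N * (B * M⁻¹) = A * B + Matrix.vecMulVec u0 c := by
      calc A * N * (B * M⁻¹) = A * (N * B) * M⁻¹ := by simp only [Matrix.mul_assoc]
        _ = A * (B * M + Matrix.vecMulVec β b) * M⁻¹ := by rw [hNB]
        _ = A * B * (M * M⁻¹) + A * Matrix.vecMulVec β b * M⁻¹ := by
            rw [Matrix.mul_add, Matrix.add_mul]; simp only [Matrix.mul_assoc]
        _ = A * B + Matrix.vecMulVec u0 c := by
            rw [hMM, Matrix.mul_one, mul_vecMulVec_mul, ← hu0_def, ← hc_def]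
    rw [hY_def, hX_def, e0, add_assoc]
  set x : Fin n → ℂ := c ᵥ* X⁻¹ with hx_def
  set y : Fin n → ℂ := c ᵥ* Y⁻¹ with hy_def
  -- determinant of Y
  have hdetY : Y.det = X.det * (1 + x ⬝ᵥ u0) := by
    have e1 : Y = X * (1 + Matrix.vecMulVec (X⁻¹ *ᵥ u0) c) := by
      rw [Matrix.mul_add, Matrix.mul_one, mul_vecMulVec, Matrix.mulVec_mulVec,
        Matrix.mul_nonsing_inv _ hXdet, Matrix.one_mulVec]
      exact hY
    rw [e1, Matrix.det_mul, Matrix.vecMulVec_eq Unit, Matrix.det_one_add_replicateCol_mul_replicateRow,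
      Matrix.dotProduct_mulVec, ← hx_def]
  -- Sherman–Morrison scalar chase
  have hyX : y ᵥ* X = (1 - y ⬝ᵥ u0) • c := by
    have h1 : y ᵥ* X + (y ⬝ᵥ u0) • c = c := by
      have h0 : y ᵥ* Y = c := by
        rw [hy_def, Matrix.vecMul_vecMul, Matrix.nonsing_inv_mul _ hYdet, Matrix.vecMul_one]
      rw [hY, Matrix.vecMul_add, vecMul_vecMulVec] at h0
      exact h0
    rw [sub_smul, one_smul]
    exact eq_sub_of_add_eq h1
  have hyx : y = (1 - y ⬝ᵥ u0) • x := by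
    have h2 := congrArg (fun w => w ᵥ* X⁻¹) hyX
    rw [Matrix.vecMul_vecMul, Matrix.mul_nonsing_inv _ hXdet, Matrix.vecMul_one,
      Matrix.smul_vecMul] at h2
    rw [hx_def]
    exact h2
  set k : ℂ := 1 - y ⬝ᵥ u0 with hk_def
  have hk : k * (1 + x ⬝ᵥ u0) = 1 := by
    have h1 : y ⬝ᵥ u0 = k * (x ⬝ᵥ u0) := by
      rw [hyx, smul_dotProduct, smul_eq_mul]
    linear_combination hk_def - h1
  have goal1 : Y.det * (Matrix.vecMul b (M⁻¹ * Y⁻¹) ⬝ᵥ α)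
      = X.det * (Matrix.vecMul b (M⁻¹ * X⁻¹) ⬝ᵥ α) := by
    have ey : Matrix.vecMul b (M⁻¹ * Y⁻¹) = y := by
      rw [hy_def, hc_def, Matrix.vecMul_vecMul]
    have ex : Matrix.vecMul b (M⁻¹ * X⁻¹) = x := by
      rw [hx_def, hc_def, Matrix.vecMul_vecMul]
    rw [ey, ex, hdetY, hyx, smul_dotProduct, smul_eq_mul]
    linear_combination (X.det * (x ⬝ᵥ α)) * hk
  -- second equality via the key pointwise identity
  have hkey := key l r hlr α β a b A B hA hB hinv
  have eM : M = Matrix.diagonal (fun j => l j - ζ) := by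
    rw [hM_def]
    ext i j
    by_cases h : i = j <;>
      simp [Matrix.diagonal, Matrix.one_apply, h, Matrix.sub_apply]
  have hlζ : ∀ j, l j - ζ ≠ 0 := by
    have h := hMdet
    rw [eM, Matrix.det_diagonal, isUnit_iff_ne_zero, Finset.prod_ne_zero_iff] at h
    exact fun j => h j (Finset.mem_univ j)
  have hMinv : M⁻¹ = Matrix.diagonal (fun j => (l j - ζ)⁻¹) := by
    apply Matrix.inv_eq_right_inv
    rw [eM, Matrix.diagonal_mul_diagonal]
    have h : (fun j => (l j - ζ) * (l j - ζ)⁻¹) = fun _ => (1 : ℂ) :=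
      funext fun j => mul_inv_cancel₀ (hlζ j)
    rw [h, Matrix.diagonal_one]
  have goal2 : X.det * (Matrix.vecMul b (M⁻¹ * X⁻¹) ⬝ᵥ α)
      = X.det * (Matrix.vecMul b (X⁻¹ * M⁻¹) ⬝ᵥ α) := by
    congr 1
    rw [hMinv, ← Matrix.vecMul_vecMul, ← Matrix.vecMul_vecMul]
    have e1 : (Matrix.vecMul b (Matrix.diagonal fun j => (l j - ζ)⁻¹)) ᵥ* X⁻¹ ⬝ᵥ α
        = ∑ j, (b j * (l j - ζ)⁻¹) * ((X⁻¹ *ᵥ α) j) := by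
      rw [← Matrix.dotProduct_mulVec]
      simp only [dotProduct, Matrix.vecMul_diagonal]
    have e2 : (Matrix.vecMul b X⁻¹) ᵥ* (Matrix.diagonal fun j => (l j - ζ)⁻¹) ⬝ᵥ α
        = ∑ j, ((Matrix.vecMul b X⁻¹) j * (l j - ζ)⁻¹) * α j := by
      simp only [dotProduct, Matrix.vecMul_diagonal]
    rw [e1, e2]
    refine Finset.sum_congr rfl fun j _ => ?_
    have h5 := hkey j
    rw [hX_def]
    linear_combination ((l j - ζ)⁻¹) * h5
  exact ⟨goal1, goal2⟩

end
end

section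
/- Under the stated assumptions, for any finite multisets X, Y of admissible parameters and any admissible parameter ζ, the shifted tau-functions satisfy (σ[X ζ] · ρ[Y ζ̄]) / (τ[X] · τ[Y]) = ⟨a[X]| F[X] · K · G[Y] |α⟩, where K = B[Y](L−ζ)⁻¹ − (R−ζ)⁻¹ B[Y]. -/
/-!
Both shifts by `ζ` change `1 + B A` (resp. `1 + A B`) by a rank-one term, because the Sylvester
equation `(R − ζ) B[·] − B[·] (L − ζ) = |β⟩⟨b[·]|` survives the shift. By the matrix determinant
lemma and Sherman–Morrison this gives `σ[Xζ] = τ[X] ⟨a[X]| F[X] (R − ζ)⁻¹ |β⟩` and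
`ρ[Yζ̄] = τ[Y] ⟨b[Y] (L − ζ)⁻¹| G[Y] |α⟩`. The same equation makes
`K = (R − ζ)⁻¹ |β⟩⟨b[Y]| (L − ζ)⁻¹` rank one, so the right-hand side is the product of these two
brackets.
-/

open Matrix

noncomputable section

/-- The diagonal matrix `∏_{ξ ∈ X} (diagonal d − ξ·1)` for a multiset `X` of parameters. -/
def sProd {n : ℕ} (d : Fin n → ℂ) (X : Multiset ℂ) : Matrix (Fin n) (Fin n) ℂ :=
  Matrix.diagonal fun i => (X.map fun ξ => d i - ξ).prod

/-- The multiset-shifted matrix `A[X] = A·∏_{ξ∈X}(R−ξ)⁻¹`. -/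
def shA {n : ℕ} (r : Fin n → ℂ) (A : Matrix (Fin n) (Fin n) ℂ) (X : Multiset ℂ) :
    Matrix (Fin n) (Fin n) ℂ :=
  A * (sProd r X)⁻¹

/-- The multiset-shifted matrix `B[X] = B·∏_{ξ∈X}(L−ξ)`. -/
def shB {n : ℕ} (l : Fin n → ℂ) (B : Matrix (Fin n) (Fin n) ℂ) (X : Multiset ℂ) :
    Matrix (Fin n) (Fin n) ℂ :=
  B * sProd l X

/-- The shifted tau-function `τ[X] = det(1 + A[X] B[X])`. -/
def shtau {n : ℕ} (l r : Fin n → ℂ) (A B : Matrix (Fin n) (Fin n) ℂ) (X : Multiset ℂ) : ℂ :=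
  (1 + shA r A X * shB l B X).det

/-- The shifted tau-function `σ[X] = τ[X]·⟨a[X]|(1+B[X]A[X])⁻¹|β⟩`. -/
def shsigma {n : ℕ} (l r a β : Fin n → ℂ) (A B : Matrix (Fin n) (Fin n) ℂ)
    (X : Multiset ℂ) : ℂ :=
  shtau l r A B X *
    (Matrix.vecMul (Matrix.vecMul a (sProd r X)⁻¹) (1 + shB l B X * shA r A X)⁻¹ ⬝ᵥ β)

/-- The shifted tau-function `ρ[X] = τ[X]·⟨b[X]|(1+A[X]B[X])⁻¹|α⟩`. -/
def shrho {n : ℕ} (l r b α : Fin n → ℂ) (A B : Matrix (Fin n) (Fin n) ℂ)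
    (X : Multiset ℂ) : ℂ :=
  shtau l r A B X *
    (Matrix.vecMul (Matrix.vecMul b (sProd l X)) (1 + shA r A X * shB l B X)⁻¹ ⬝ᵥ α)

/-- A parameter `ξ` is admissible if `R − ξ·1` and `L − ξ·1` are invertible. -/
def Adm {n : ℕ} (l r : Fin n → ℂ) (ξ : ℂ) : Prop :=
  IsUnit (Matrix.diagonal r - ξ • (1 : Matrix (Fin n) (Fin n) ℂ)) ∧
    IsUnit (Matrix.diagonal l - ξ • (1 : Matrix (Fin n) (Fin n) ℂ))

/-- `Γ_ξ(Y, X) = ∏_{η∈Y}(ξ−η) / ∏_{η∈X, η≠ξ}(ξ−η)`. -/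
def Gam (Y : Multiset ℂ) (X : Finset ℂ) (ξ : ℂ) : ℂ :=
  (Y.map fun η => ξ - η).prod / ∏ η ∈ X.erase ξ, (ξ - η)

namespace Matrix

variable {m R : Type*} [Fintype m] [CommRing R]

theorem vecMul_mul_vecMulVec_mul_dotProduct (x y u v : m → R) (M N : Matrix m m R) :
    x ᵥ* (M * vecMulVec u v * N) ⬝ᵥ y = (x ᵥ* M ⬝ᵥ u) * (v ᵥ* N ⬝ᵥ y) := by
  rw [mul_vecMulVec, vecMulVec_mul, ← dotProduct_mulVec, vecMulVec_mulVec, op_smul_eq_smul,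
    dotProduct_smul, smul_eq_mul, dotProduct_mulVec, mul_comm]

variable [DecidableEq m]

theorem det_add_vecMulVec_s5 {S : Matrix m m R} (hS : IsUnit S.det) (u w : m → R) :
    (S + vecMulVec u w).det = S.det * (1 + w ⬝ᵥ S⁻¹ *ᵥ u) := by
  have hfac : S + vecMulVec u w = S * (1 + vecMulVec (S⁻¹ *ᵥ u) w) := by
    rw [Matrix.mul_add, Matrix.mul_one, mul_vecMulVec, mulVec_mulVec, mul_nonsing_inv _ hS,
      one_mulVec]
  rw [hfac, det_mul, vecMulVec_eq Unit, det_one_add_replicateCol_mul_replicateRow]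

/-- In terms of adjugates: `adj (S + u wᵀ) u = adj S u`. -/
theorem det_smul_inv_mulVec_add_vecMulVec {S : Matrix m m R} (hS : IsUnit S.det) (u w : m → R)
    (hN : IsUnit (S + vecMulVec u w).det) :
    (S + vecMulVec u w).det • ((S + vecMulVec u w)⁻¹ *ᵥ u) = S.det • (S⁻¹ *ᵥ u) := by
  set c := w ⬝ᵥ S⁻¹ *ᵥ u
  have hSinv : (S + vecMulVec u w) *ᵥ (S⁻¹ *ᵥ u) = (1 + c) • u := by
    rw [add_mulVec, mulVec_mulVec, mul_nonsing_inv _ hS, one_mulVec, vecMulVec_mulVec,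
      op_smul_eq_smul, add_smul, one_smul]
  have hNinv : (1 + c) • ((S + vecMulVec u w)⁻¹ *ᵥ u) = S⁻¹ *ᵥ u := by
    rw [← mulVec_smul, ← hSinv, mulVec_mulVec, nonsing_inv_mul _ hN, one_mulVec]
  rw [det_add_vecMulVec_s5 hS, mul_smul, hNinv]

theorem det_smul_vecMul_inv_add_vecMulVec {S : Matrix m m R} (hS : IsUnit S.det) (u w : m → R)
    (hN : IsUnit (S + vecMulVec u w).det) :
    (S + vecMulVec u w).det • (w ᵥ* (S + vecMulVec u w)⁻¹) = S.det • (w ᵥ* S⁻¹) := by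
  have hT : (S + vecMulVec u w)ᵀ = Sᵀ + vecMulVec w u := by
    rw [transpose_add, transpose_vecMulVec]
  have h := det_smul_inv_mulVec_add_vecMulVec (S := Sᵀ) (by rwa [det_transpose]) w u
    (by rwa [← hT, det_transpose])
  rwa [← hT, det_transpose, det_transpose, ← transpose_nonsing_inv, ← transpose_nonsing_inv,
    mulVec_transpose, mulVec_transpose] at h

section Sylvester

variable {A B P Q : Matrix m m R} {β b : m → R}

theorem mul_inv_sub_inv_mul_of_sylvester (hP : IsUnit P.det) (hQ : IsUnit Q.det)
    (hPQ : P * B - B * Q = vecMulVec β b) :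
    B * Q⁻¹ - P⁻¹ * B = vecMulVec (P⁻¹ *ᵥ β) (b ᵥ* Q⁻¹) := by
  rw [← vecMulVec_mul, ← mul_vecMulVec, ← hPQ, Matrix.mul_sub, Matrix.sub_mul,
    ← Matrix.mul_assoc, nonsing_inv_mul _ hP, Matrix.one_mul, Matrix.mul_assoc P⁻¹,
    mul_nonsing_inv_cancel_right _ _ hQ]

theorem det_mul_dotProduct_of_sylvester_left (a : m → R) (hP : IsUnit P.det)
    (hT : IsUnit (1 + B * A).det) (hM : IsUnit (1 + A * P⁻¹ * (B * Q)).det)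
    (hPQ : P * B - B * Q = vecMulVec β b) :
    (1 + A * P⁻¹ * (B * Q)).det * (a ᵥ* P⁻¹ ᵥ* (1 + B * Q * (A * P⁻¹))⁻¹ ⬝ᵥ β)
      = (1 + B * A).det * (a ᵥ* (1 + B * A)⁻¹ ⬝ᵥ P⁻¹ *ᵥ β) := by
  set N := 1 + B * A + vecMulVec (P⁻¹ *ᵥ β) (-(b ᵥ* A))
  have hBQ : B * Q = P * B - vecMulVec β b := by rw [← hPQ]; abel
  -- up to conjugation by `P`, the shifted matrix is a rank-one update of `1 + B A`
  have hconj : 1 + B * Q * (A * P⁻¹) = P * N * P⁻¹ := by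
    simp only [N, hBQ, Matrix.mul_add, Matrix.add_mul, Matrix.sub_mul, vecMulVec_neg,
      Matrix.mul_neg, Matrix.neg_mul, Matrix.mul_assoc, vecMulVec_mul, mul_vecMulVec,
      mulVec_mulVec, mul_nonsing_inv _ hP, one_mulVec, Matrix.mul_one, vecMul_vecMul]
    abel
  have hPu : IsUnit P := (isUnit_iff_isUnit_det P).mpr hP
  have hdet : (1 + A * P⁻¹ * (B * Q)).det = N.det := by
    rw [det_one_add_mul_comm, hconj, det_conj hPu]
  have hinv : (1 + B * Q * (A * P⁻¹))⁻¹ = P * N⁻¹ * P⁻¹ := by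
    rw [hconj, Matrix.mul_inv_rev, Matrix.mul_inv_rev, nonsing_inv_nonsing_inv _ hP,
      Matrix.mul_assoc]
  rw [hdet] at hM ⊢
  have key := congrArg (a ⬝ᵥ ·) (det_smul_inv_mulVec_add_vecMulVec hT _ _ hM)
  simp only [dotProduct_smul, smul_eq_mul] at key
  rw [hinv, vecMul_vecMul, ← Matrix.mul_assoc, ← Matrix.mul_assoc, nonsing_inv_mul _ hP,
    Matrix.one_mul]
  simpa only [dotProduct_mulVec, vecMul_vecMul] using key

theorem det_mul_dotProduct_of_sylvester_right (α : m → R) (hQ : IsUnit Q.det)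
    (hS : IsUnit (1 + A * B).det) (hN : IsUnit (1 + A * P * (B * Q⁻¹)).det)
    (hPQ : P * B - B * Q = vecMulVec β b) :
    (1 + A * P * (B * Q⁻¹)).det * (b ᵥ* Q⁻¹ ᵥ* (1 + A * P * (B * Q⁻¹))⁻¹ ⬝ᵥ α)
      = (1 + A * B).det * (b ᵥ* Q⁻¹ ᵥ* (1 + A * B)⁻¹ ⬝ᵥ α) := by
  have hPB : P * B = B * Q + vecMulVec β b := by rw [← hPQ]; abel
  have hupd : 1 + A * P * (B * Q⁻¹) = 1 + A * B + vecMulVec (A *ᵥ β) (b ᵥ* Q⁻¹) := by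
    rw [Matrix.mul_assoc, ← Matrix.mul_assoc P, hPB, Matrix.add_mul,
      mul_nonsing_inv_cancel_right _ _ hQ, vecMulVec_mul, Matrix.mul_add, mul_vecMulVec, add_assoc]
  rw [hupd] at hN ⊢
  have key := congrArg (· ⬝ᵥ α) (det_smul_vecMul_inv_add_vecMulVec hS _ _ hN)
  simpa only [smul_dotProduct, smul_eq_mul] using key

theorem sylvester_sub_smul_one_mul_of_commute (hPQ : P * B - B * Q = vecMulVec β b)
    {D : Matrix m m R} (hD : Commute Q D) (ζ : R) :
    (P - ζ • 1) * (B * D) - B * D * (Q - ζ • 1) = vecMulVec β (b ᵥ* D) := by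
  rw [← vecMulVec_mul, ← hPQ]
  simp only [Matrix.sub_mul, Matrix.mul_sub, Matrix.smul_mul, Matrix.mul_smul, Matrix.one_mul,
    Matrix.mul_one, Matrix.mul_assoc, hD.eq]
  abel

end Sylvester

end Matrix

section Shifts

variable {n : ℕ}

theorem sub_smul_one_eq_diagonal (d : Fin n → ℂ) (ζ : ℂ) :
    diagonal d - ζ • (1 : Matrix (Fin n) (Fin n) ℂ) = diagonal fun i => d i - ζ := by
  rw [smul_one_eq_diagonal, diagonal_sub]

theorem sProd_cons (d : Fin n → ℂ) (ζ : ℂ) (X : Multiset ℂ) :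
    sProd d (ζ ::ₘ X) = (diagonal d - ζ • 1) * sProd d X := by
  simp only [sProd, sub_smul_one_eq_diagonal, diagonal_mul_diagonal, Multiset.map_cons,
    Multiset.prod_cons]

theorem commute_sub_smul_one_sProd (d : Fin n → ℂ) (ζ : ℂ) (X : Multiset ℂ) :
    Commute (diagonal d - ζ • 1) (sProd d X) := by
  rw [sub_smul_one_eq_diagonal]
  exact commute_diagonal _ _

theorem shA_cons (r : Fin n → ℂ) (A : Matrix (Fin n) (Fin n) ℂ) (ζ : ℂ) (X : Multiset ℂ) :
    shA r A (ζ ::ₘ X) = shA r A X * (diagonal r - ζ • 1)⁻¹ := by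
  rw [shA, shA, sProd_cons, Matrix.mul_inv_rev, Matrix.mul_assoc]

theorem shB_cons (l : Fin n → ℂ) (B : Matrix (Fin n) (Fin n) ℂ) (ζ : ℂ) (X : Multiset ℂ) :
    shB l B (ζ ::ₘ X) = shB l B X * (diagonal l - ζ • 1) := by
  rw [shB, shB, sProd_cons, (commute_sub_smul_one_sProd l ζ X).eq, Matrix.mul_assoc]

theorem shB_sylvester {l r β b : Fin n → ℂ} {B : Matrix (Fin n) (Fin n) ℂ}
    (hB : diagonal r * B - B * diagonal l = vecMulVec β b) (ζ : ℂ) (X : Multiset ℂ) :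
    (diagonal r - ζ • 1) * shB l B X - shB l B X * (diagonal l - ζ • 1)
      = vecMulVec β (b ᵥ* sProd l X) :=
  sylvester_sub_smul_one_mul_of_commute hB (commute_diagonal _ _) ζ

end Shifts

theorem statement5_general {n : ℕ} (l r : Fin n → ℂ)
    (α β a b : Fin n → ℂ)
    (A B : Matrix (Fin n) (Fin n) ℂ)
    (hB : Matrix.diagonal r * B - B * Matrix.diagonal l = Matrix.vecMulVec β b)
    (X Y : Multiset ℂ) (ζ : ℂ)
    (hζ : Adm l r ζ)
    (hiX : IsUnit (1 + shA r A X * shB l B X))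
    (hiY : IsUnit (1 + shA r A Y * shB l B Y))
    (hiXz : IsUnit (1 + shA r A (ζ ::ₘ X) * shB l B (ζ ::ₘ X)))
    (hiYz : IsUnit (1 + (shA r A Y * (Matrix.diagonal r - ζ • 1)) *
        (shB l B Y * (Matrix.diagonal l - ζ • 1)⁻¹))) :
    shsigma l r a β A B (ζ ::ₘ X) *
        ((1 + (shA r A Y * (Matrix.diagonal r - ζ • 1)) *
            (shB l B Y * (Matrix.diagonal l - ζ • 1)⁻¹)).det *
          (Matrix.vecMul
              (Matrix.vecMul (Matrix.vecMul b (sProd l Y)) (Matrix.diagonal l - ζ • 1)⁻¹)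
              (1 + (shA r A Y * (Matrix.diagonal r - ζ • 1)) *
                (shB l B Y * (Matrix.diagonal l - ζ • 1)⁻¹))⁻¹ ⬝ᵥ α)) /
        (shtau l r A B X * shtau l r A B Y)
      = Matrix.vecMul (Matrix.vecMul a (sProd r X)⁻¹)
          ((1 + shB l B X * shA r A X)⁻¹ *
            (shB l B Y * (Matrix.diagonal l - ζ • 1)⁻¹
              - (Matrix.diagonal r - ζ • 1)⁻¹ * shB l B Y) *
            (1 + shA r A Y * shB l B Y)⁻¹) ⬝ᵥ α := by
  have hR := (isUnit_iff_isUnit_det _).mp hζ.1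
  have hL := (isUnit_iff_isUnit_det _).mp hζ.2
  have hTX : IsUnit (1 + shB l B X * shA r A X).det := by
    rw [← det_one_add_mul_comm]; exact (isUnit_iff_isUnit_det _).mp hiX
  have hTY := (isUnit_iff_isUnit_det _).mp hiY
  rw [shA_cons, shB_cons] at hiXz
  have hσ : shsigma l r a β A B (ζ ::ₘ X) = (1 + shB l B X * shA r A X).det *
      (a ᵥ* (sProd r X)⁻¹ ᵥ* (1 + shB l B X * shA r A X)⁻¹ ⬝ᵥ (diagonal r - ζ • 1)⁻¹ *ᵥ β) := by
    rw [shsigma, shtau, shA_cons, shB_cons, sProd_cons, Matrix.mul_inv_rev, ← vecMul_vecMul]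
    exact det_mul_dotProduct_of_sylvester_left _ hR hTX ((isUnit_iff_isUnit_det _).mp hiXz)
      (shB_sylvester hB ζ X)
  rw [hσ, det_mul_dotProduct_of_sylvester_right α hL hTY ((isUnit_iff_isUnit_det _).mp hiYz)
      (shB_sylvester hB ζ Y), mul_inv_sub_inv_mul_of_sylvester hR hL (shB_sylvester hB ζ Y),
    vecMul_mul_vecMulVec_mul_dotProduct, shtau, shtau, det_one_add_mul_comm (shA r A X)]
  field_simp [hTX.ne_zero, hTY.ne_zero]

/-- `(σ[Xζ]·ρ[Yζ̄])/(τ[X]·τ[Y]) = ⟨a[X]|F[X]·K·G[Y]|α⟩` with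
`K = B[Y](L−ζ)⁻¹ − (R−ζ)⁻¹B[Y]`. -/
theorem statement5 {n : ℕ} (hn : 1 ≤ n) (l r : Fin n → ℂ)
    (hlr : ∀ j k, l j ≠ r k) (α β a b : Fin n → ℂ)
    (A B : Matrix (Fin n) (Fin n) ℂ)
    (hA : Matrix.diagonal l * A - A * Matrix.diagonal r = Matrix.vecMulVec α a)
    (hB : Matrix.diagonal r * B - B * Matrix.diagonal l = Matrix.vecMulVec β b)
    (X Y : Multiset ℂ) (ζ : ℂ)
    (hX : ∀ ξ ∈ X, Adm l r ξ) (hY : ∀ ξ ∈ Y, Adm l r ξ) (hζ : Adm l r ζ)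
    (hiX : IsUnit (1 + shA r A X * shB l B X))
    (hiY : IsUnit (1 + shA r A Y * shB l B Y))
    (hiXz : IsUnit (1 + shA r A (ζ ::ₘ X) * shB l B (ζ ::ₘ X)))
    (hiYz : IsUnit (1 + (shA r A Y * (Matrix.diagonal r - ζ • 1)) *
        (shB l B Y * (Matrix.diagonal l - ζ • 1)⁻¹))) :
    shsigma l r a β A B (ζ ::ₘ X) *
        ((1 + (shA r A Y * (Matrix.diagonal r - ζ • 1)) *
            (shB l B Y * (Matrix.diagonal l - ζ • 1)⁻¹)).det *
          (Matrix.vecMul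
              (Matrix.vecMul (Matrix.vecMul b (sProd l Y)) (Matrix.diagonal l - ζ • 1)⁻¹)
              (1 + (shA r A Y * (Matrix.diagonal r - ζ • 1)) *
                (shB l B Y * (Matrix.diagonal l - ζ • 1)⁻¹))⁻¹ ⬝ᵥ α)) /
        (shtau l r A B X * shtau l r A B Y)
      = Matrix.vecMul (Matrix.vecMul a (sProd r X)⁻¹)
          ((1 + shB l B X * shA r A X)⁻¹ *
            (shB l B Y * (Matrix.diagonal l - ζ • 1)⁻¹
              - (Matrix.diagonal r - ζ • 1)⁻¹ * shB l B Y) *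
            (1 + shA r A Y * shB l B Y)⁻¹) ⬝ᵥ α :=
  statement5_general l r α β a b A B hB X Y ζ hζ hiX hiY hiXz hiYz
end
end
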